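/- Let ℰ be a non-abelian extension of 𝒜 by ℬ with induced 2-cocycle Θ = (ω,ϖ,χ,μ,ρ_B,ρ_M). A pair (α,β) ∈ Aut(𝒜) × Aut(ℬ) is inducible if and only if the 2-cocycles Θ and Θ_{(α,β)} = (ω_{(α,β)},ϖ_{(α,β)},χ_{(α,β)},μ_{(α,β)},ρ_{B,(α,β)},ρ_{M,(α,β)}) are equivalent as non-abelian 2-cocycles. -/
import Mathlib


universe u

section
variable (K : Type u) [Field K]

/-- A relative Rota-Baxter Lie algebra: a Lie algebra `A`, a representation `rep` of `A`
on `V`, and a relative Rota-Baxter operator `T : V → A`. -/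
structure RelRB (A V : Type u) [AddCommGroup A] [Module K A]
    [AddCommGroup V] [Module K V] : Type u where
  br : A →ₗ[K] A →ₗ[K] A
  skew : ∀ x y, br x y + br y x = 0
  jacobi : ∀ x y z, br x (br y z) = br (br x y) z + br y (br x z)
  rep : A →ₗ[K] Module.End K V
  rep_br : ∀ x y, rep (br x y) = rep x * rep y - rep y * rep x
  T : V →ₗ[K] A
  rb : ∀ u v, br (T u) (T v) = T (rep (T u) v - rep (T v) u)

variable {A V B M : Type u}
  [AddCommGroup A] [Module K A] [AddCommGroup V] [Module K V]
  [AddCommGroup B] [Module K B] [AddCommGroup M] [Module K M]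

/-- Equivalence of non-abelian 2-cocycles via linear maps `ζ : A → B`, `η : V → M`:
equations (E1)-(E6). -/
def CocycleEquiv (𝒜 : RelRB K A V) (ℬ : RelRB K B M)
    (ω : A → A → B) (ϖ : A → V → M) (χ : V → B)
    (μ : V → B → M) (ρB : A → B → B) (ρM : A → M → M)
    (ω' : A → A → B) (ϖ' : A → V → M) (χ' : V → B)
    (μ' : V → B → M) (ρB' : A → B → B) (ρM' : A → M → M)
    (ζ : A → B) (η : V → M) : Prop :=
  (∀ x y, ω x y - ω' x y
      = ρB' x (ζ y) - ρB' y (ζ x) - ζ (𝒜.br x y) + ℬ.br (ζ x) (ζ y)) ∧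
  (∀ x a, ρB x a - ρB' x a = ℬ.br (ζ x) a) ∧
  (∀ x m, ρM x m - ρM' x m = ℬ.rep (ζ x) m) ∧
  (∀ v a, μ v a - μ' v a = - ℬ.rep a (η v)) ∧
  (∀ v, χ v - χ' v = ℬ.T (η v) - ζ (𝒜.T v)) ∧
  (∀ x v, ϖ x v - ϖ' x v
      = ρM' x (η v) + ℬ.rep (ζ x) (η v) - μ' v (ζ x) - η (𝒜.rep x v))
/-- A non-abelian extension of `𝒜` by `ℬ`: a relative Rota-Baxter Lie algebra `ℰ`
together with a short exact sequence `0 → ℬ → ℰ → 𝒜 → 0` of relative Rota-Baxter Lie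
algebras. -/
structure ExtData {Ah Vh : Type u} [AddCommGroup Ah] [Module K Ah]
    [AddCommGroup Vh] [Module K Vh]
    (𝒜 : RelRB K A V) (ℬ : RelRB K B M) (ℰ : RelRB K Ah Vh) : Type u where
  iB : B →ₗ[K] Ah
  iM : M →ₗ[K] Vh
  pA : Ah →ₗ[K] A
  pV : Vh →ₗ[K] V
  iB_br : ∀ a b, iB (ℬ.br a b) = ℰ.br (iB a) (iB b)
  iB_T : ∀ m, iB (ℬ.T m) = ℰ.T (iM m)
  i_rep : ∀ a m, iM (ℬ.rep a m) = ℰ.rep (iB a) (iM m)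
  pA_br : ∀ x y, pA (ℰ.br x y) = 𝒜.br (pA x) (pA y)
  p_T : ∀ vh, pA (ℰ.T vh) = 𝒜.T (pV vh)
  p_rep : ∀ x vh, pV (ℰ.rep x vh) = 𝒜.rep (pA x) (pV vh)
  iB_inj : Function.Injective iB
  iM_inj : Function.Injective iM
  pA_surj : Function.Surjective pA
  pV_surj : Function.Surjective pV
  exactA : ∀ x, pA x = 0 ↔ x ∈ Set.range iB
  exactV : ∀ v, pV v = 0 ↔ v ∈ Set.range iM
/-- The non-abelian 2-cocycle induced by a section `(sA, sV)` of a non-abelian extension: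
`iB (ω x y) = [sA x, sA y] - sA [x,y]`, `iM (ϖ x v) = ρ̂(sA x)(sV v) - sV (ρ(x)v)`,
`iB (χ v) = T̂(sV v) - sA (T v)`, `iM (μ v a) = -ρ̂(iB a)(sV v)`,
`iB (ρB x a) = [sA x, iB a]`, `iM (ρM x m) = ρ̂(sA x)(iM m)`. -/
def InducedCocycle {Ah Vh : Type u} [AddCommGroup Ah] [Module K Ah]
    [AddCommGroup Vh] [Module K Vh]
    {𝒜 : RelRB K A V} {ℬ : RelRB K B M} {ℰ : RelRB K Ah Vh}
    (E : ExtData K 𝒜 ℬ ℰ) (sA : A →ₗ[K] Ah) (sV : V →ₗ[K] Vh)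
    (ω : A → A → B) (ϖ : A → V → M) (χ : V → B)
    (μ : V → B → M) (ρB : A → B → B) (ρM : A → M → M) : Prop :=
  (∀ x y, E.iB (ω x y) = ℰ.br (sA x) (sA y) - sA (𝒜.br x y)) ∧
  (∀ x v, E.iM (ϖ x v) = ℰ.rep (sA x) (sV v) - sV (𝒜.rep x v)) ∧
  (∀ v, E.iB (χ v) = ℰ.T (sV v) - sA (𝒜.T v)) ∧
  (∀ v a, E.iM (μ v a) = - ℰ.rep (E.iB a) (sV v)) ∧
  (∀ x a, E.iB (ρB x a) = ℰ.br (sA x) (E.iB a)) ∧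
  (∀ x m, E.iM (ρM x m) = ℰ.rep (sA x) (E.iM m))
/-- Automorphism conditions for a pair of plain maps. -/
def IsAutFun (𝒜 : RelRB K A V) (f : A → A) (g : V → V) : Prop :=
  Function.Bijective f ∧ Function.Bijective g ∧
  (∀ x y, f (𝒜.br x y) = 𝒜.br (f x) (f y)) ∧
  (∀ v, f (𝒜.T v) = 𝒜.T (g v)) ∧
  (∀ x v, g (𝒜.rep x v) = 𝒜.rep (f x) (g v))
/-- Inducibility of a pair `(α, β)` of automorphisms with respect to a non-abelian
extension: there is an automorphism `γ` of `ℰ` restricting to `β` on `ℬ` and projecting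
to `α` on `𝒜`. -/
def Inducible {Ah Vh : Type u} [AddCommGroup Ah] [Module K Ah]
    [AddCommGroup Vh] [Module K Vh]
    {𝒜 : RelRB K A V} {ℬ : RelRB K B M} {ℰ : RelRB K Ah Vh}
    (E : ExtData K 𝒜 ℬ ℰ) (sA : A →ₗ[K] Ah) (sV : V →ₗ[K] Vh)
    (α₁ : A → A) (α₂ : V → V) (β₁ : B → B) (β₂ : M → M) : Prop :=
  ∃ (γ₁ : Ah ≃ₗ[K] Ah) (γ₂ : Vh ≃ₗ[K] Vh),
    (∀ x y, γ₁ (ℰ.br x y) = ℰ.br (γ₁ x) (γ₁ y)) ∧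
    (∀ v, γ₁ (ℰ.T v) = ℰ.T (γ₂ v)) ∧
    (∀ x v, γ₂ (ℰ.rep x v) = ℰ.rep (γ₁ x) (γ₂ v)) ∧
    (∀ a, γ₁ (E.iB a) = E.iB (β₁ a)) ∧
    (∀ m, γ₂ (E.iM m) = E.iM (β₂ m)) ∧
    (∀ x, E.pA (γ₁ (sA x)) = α₁ x) ∧
    (∀ v, E.pV (γ₂ (sV v)) = α₂ v)

lemma exists_preim {B' Ah' X : Type u} [AddCommGroup B'] [Module K B']
    [AddCommGroup Ah'] [Module K Ah'] [AddCommGroup X] [Module K X]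
    (f : B' →ₗ[K] Ah') (hf : Function.Injective f) (g : X →ₗ[K] Ah')
    (hg : ∀ x, g x ∈ LinearMap.range f) : ∃ h : X →ₗ[K] B', ∀ x, f (h x) = g x := by
  refine ⟨(LinearEquiv.ofInjective f hf).symm.toLinearMap ∘ₗ
    g.codRestrict (LinearMap.range f) hg, ?_⟩
  intro x
  have h1 := (LinearEquiv.ofInjective f hf).apply_symm_apply ⟨g x, hg x⟩
  have h2 := congrArg Subtype.val h1
  simpa [LinearEquiv.ofInjective_apply] using h2

/-- a pair `(α,β)` of automorphisms is inducible iff the induced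
2-cocycle `Θ` and its twist `Θ_{(α,β)}` are equivalent non-abelian 2-cocycles. -/
theorem inducible_iff_cocycles_equivalent {Ah Vh : Type u}
    [AddCommGroup Ah] [Module K Ah] [AddCommGroup Vh] [Module K Vh]
    (𝒜 : RelRB K A V) (ℬ : RelRB K B M) (ℰ : RelRB K Ah Vh)
    (E : ExtData K 𝒜 ℬ ℰ)
    (sA : A →ₗ[K] Ah) (sV : V →ₗ[K] Vh)
    (hsA : ∀ x, E.pA (sA x) = x) (hsV : ∀ v, E.pV (sV v) = v)
    (ω : A → A → B) (ϖ : A → V → M) (χ : V → B)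
    (μ : V → B → M) (ρB : A → B → B) (ρM : A → M → M)
    (hcoc : InducedCocycle K E sA sV ω ϖ χ μ ρB ρM)
    (α₁ : A ≃ₗ[K] A) (α₂ : V ≃ₗ[K] V)
    (hα : IsAutFun K 𝒜 (fun x => α₁ x) (fun v => α₂ v))
    (β₁ : B ≃ₗ[K] B) (β₂ : M ≃ₗ[K] M)
    (hβ : IsAutFun K ℬ (fun a => β₁ a) (fun m => β₂ m)) :
    Inducible K E sA sV (fun x => α₁ x) (fun v => α₂ v)
        (fun a => β₁ a) (fun m => β₂ m) ↔
      ∃ (ζ : A →ₗ[K] B) (η : V →ₗ[K] M),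
        CocycleEquiv K 𝒜 ℬ
          (fun x y => β₁ (ω (α₁.symm x) (α₁.symm y)))
          (fun x v => β₂ (ϖ (α₁.symm x) (α₂.symm v)))
          (fun v => β₁ (χ (α₂.symm v)))
          (fun v a => β₂ (μ (α₂.symm v) (β₁.symm a)))
          (fun x a => β₁ (ρB (α₁.symm x) (β₁.symm a)))
          (fun x m => β₂ (ρM (α₁.symm x) (β₂.symm m)))
          ω ϖ χ μ ρB ρM (fun x => ζ x) (fun v => η v) := by
  obtain ⟨hω, hϖ, hχ, hμ, hρB, hρM⟩ := hcoc
  obtain ⟨-, -, hαbr, hαT, hαrep⟩ := hα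
  obtain ⟨-, -, hβbr, hβT, hβrep⟩ := hβ
  have hαbr' : ∀ x y, α₁ (𝒜.br x y) = 𝒜.br (α₁ x) (α₁ y) := hαbr
  have hαT' : ∀ v, α₁ (𝒜.T v) = 𝒜.T (α₂ v) := hαT
  have hαrep' : ∀ x v, α₂ (𝒜.rep x v) = 𝒜.rep (α₁ x) (α₂ v) := hαrep
  have hβbr' : ∀ x y, β₁ (ℬ.br x y) = ℬ.br (β₁ x) (β₁ y) := hβbr
  have hβT' : ∀ v, β₁ (ℬ.T v) = ℬ.T (β₂ v) := hβT
  have hβrep' : ∀ x v, β₂ (ℬ.rep x v) = ℬ.rep (β₁ x) (β₂ v) := hβrep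
  have pA_iB : ∀ a, E.pA (E.iB a) = 0 := fun a => (E.exactA _).mpr ⟨a, rfl⟩
  have pV_iM : ∀ m, E.pV (E.iM m) = 0 := fun m => (E.exactV _).mpr ⟨m, rfl⟩
  have ℰskew : ∀ x y, ℰ.br x y = -ℰ.br y x :=
    fun x y => eq_neg_of_add_eq_zero_left (ℰ.skew x y)
  have ℬskew : ∀ x y, ℬ.br x y = -ℬ.br y x :=
    fun x y => eq_neg_of_add_eq_zero_left (ℬ.skew x y)
  have hATs : ∀ v, 𝒜.T (α₂.symm v) = α₁.symm (𝒜.T v) := by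
    intro v
    conv_lhs => rw [show (𝒜.T (α₂.symm v)) = α₁.symm (α₁ (𝒜.T (α₂.symm v))) from
      (α₁.symm_apply_apply _).symm]
    rw [hαT' (α₂.symm v)]
    simp
  have hAbrs : ∀ x y, 𝒜.br (α₁.symm x) (α₁.symm y) = α₁.symm (𝒜.br x y) := by
    intro x y
    conv_lhs => rw [show (𝒜.br (α₁.symm x) (α₁.symm y))
      = α₁.symm (α₁ (𝒜.br (α₁.symm x) (α₁.symm y))) from (α₁.symm_apply_apply _).symm]
    rw [hαbr' (α₁.symm x) (α₁.symm y)]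
    simp
  have hAreps : ∀ x v, 𝒜.rep (α₁.symm x) (α₂.symm v) = α₂.symm (𝒜.rep x v) := by
    intro x v
    conv_lhs => rw [show (𝒜.rep (α₁.symm x) (α₂.symm v))
      = α₂.symm (α₂ (𝒜.rep (α₁.symm x) (α₂.symm v))) from (α₂.symm_apply_apply _).symm]
    rw [hαrep' (α₁.symm x) (α₂.symm v)]
    simp
  constructor
  · rintro ⟨γ₁, γ₂, hgbr, hgT, hgrep, hgB, hgM, hgA, hgV⟩
    simp only [] at hgB hgM hgA hgV
    have hmemζ : ∀ x, ((γ₁.toLinearMap ∘ₗ sA ∘ₗ (α₁.symm : A →ₗ[K] A)) - sA) x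
        ∈ LinearMap.range E.iB := by
      intro x
      have h0 : E.pA (((γ₁.toLinearMap ∘ₗ sA ∘ₗ (α₁.symm : A →ₗ[K] A)) - sA) x) = 0 := by
        simp only [LinearMap.sub_apply, LinearMap.comp_apply, LinearEquiv.coe_coe,
          map_sub, hgA, hsA, LinearEquiv.apply_symm_apply, sub_self]
      obtain ⟨b, hb⟩ := (E.exactA _).mp h0
      exact ⟨b, hb⟩
    obtain ⟨ζ, hζ⟩ := exists_preim K E.iB E.iB_inj _ hmemζ
    have hmemη : ∀ v, ((γ₂.toLinearMap ∘ₗ sV ∘ₗ (α₂.symm : V →ₗ[K] V)) - sV) v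
        ∈ LinearMap.range E.iM := by
      intro v
      have h0 : E.pV (((γ₂.toLinearMap ∘ₗ sV ∘ₗ (α₂.symm : V →ₗ[K] V)) - sV) v) = 0 := by
        simp only [LinearMap.sub_apply, LinearMap.comp_apply, LinearEquiv.coe_coe,
          map_sub, hgV, hsV, LinearEquiv.apply_symm_apply, sub_self]
      obtain ⟨m, hm⟩ := (E.exactV _).mp h0
      exact ⟨m, hm⟩
    obtain ⟨η, hη⟩ := exists_preim K E.iM E.iM_inj _ hmemη
    have keyζ : ∀ x, γ₁ (sA (α₁.symm x)) = sA x + E.iB (ζ x) := by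
      intro x
      have h := hζ x
      simp only [LinearMap.sub_apply, LinearMap.comp_apply, LinearEquiv.coe_coe] at h
      rw [h]; abel
    have keyη : ∀ v, γ₂ (sV (α₂.symm v)) = sV v + E.iM (η v) := by
      intro v
      have h := hη v
      simp only [LinearMap.sub_apply, LinearMap.comp_apply, LinearEquiv.coe_coe] at h
      rw [h]; abel
    refine ⟨ζ, η, ?_, ?_, ?_, ?_, ?_, ?_⟩
    · intro x y
      beta_reduce
      apply E.iB_inj
      rw [map_sub, ← hgB]
      simp only [map_sub, map_add, hω, hϖ, hχ, hμ, hρB, hρM, hgbr, hgT, hgrep, hgB,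
        hgM, keyζ, keyη, E.iB_br, E.iB_T, E.i_rep, LinearMap.add_apply,
        LinearMap.sub_apply, LinearEquiv.apply_symm_apply, hATs, hAbrs, hAreps]
      rw [ℰskew (E.iB (ζ x)) (sA y)]
      abel
    · intro x a
      beta_reduce
      apply E.iB_inj
      rw [map_sub, ← hgB]
      simp only [map_sub, map_add, hρB, hgbr, hgB, keyζ, E.iB_br,
        LinearMap.add_apply, LinearMap.sub_apply, LinearEquiv.apply_symm_apply]
      abel
    · intro x m
      beta_reduce
      apply E.iM_inj
      rw [map_sub, ← hgM]
      simp only [map_sub, map_add, hρM, hgrep, hgM, keyζ, E.i_rep,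
        LinearMap.add_apply, LinearMap.sub_apply, LinearEquiv.apply_symm_apply]
      abel
    · intro v a
      beta_reduce
      apply E.iM_inj
      rw [map_sub, ← hgM]
      simp only [map_sub, map_add, map_neg, hμ, hgrep, hgB, keyη, E.i_rep,
        LinearMap.add_apply, LinearMap.sub_apply, LinearEquiv.apply_symm_apply]
      abel
    · intro v
      beta_reduce
      apply E.iB_inj
      rw [map_sub, ← hgB]
      simp only [map_sub, map_add, hχ, hgT, keyζ, keyη, E.iB_T, hATs,
        LinearMap.add_apply, LinearMap.sub_apply, LinearEquiv.apply_symm_apply]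
      abel
    · intro x v
      beta_reduce
      apply E.iM_inj
      rw [map_sub, ← hgM]
      simp only [map_sub, map_add, map_neg, hϖ, hμ, hρM, hgrep, hgB, hgM, keyζ, keyη,
        E.i_rep, hAreps, LinearMap.add_apply, LinearMap.sub_apply,
        LinearEquiv.apply_symm_apply]
      abel
  · rintro ⟨ζ, η, h1, h2, h3, h4, h5, h6⟩
    simp only [] at h1 h2 h3 h4 h5 h6
    have hE1' : ∀ u w, β₁ (ω u w) = ω (α₁ u) (α₁ w)
        + (ρB (α₁ u) (ζ (α₁ w)) - ρB (α₁ w) (ζ (α₁ u)) - ζ (𝒜.br (α₁ u) (α₁ w))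
          + ℬ.br (ζ (α₁ u)) (ζ (α₁ w))) := by
      intro u w
      have h := h1 (α₁ u) (α₁ w)
      simp only [LinearEquiv.symm_apply_apply] at h
      exact sub_eq_iff_eq_add'.mp h
    have hE2' : ∀ x a, β₁ (ρB x a) = ρB (α₁ x) (β₁ a) + ℬ.br (ζ (α₁ x)) (β₁ a) := by
      intro x a
      have h := h2 (α₁ x) (β₁ a)
      simp only [LinearEquiv.symm_apply_apply] at h
      exact sub_eq_iff_eq_add'.mp h
    have hE3' : ∀ x m, β₂ (ρM x m) = ρM (α₁ x) (β₂ m) + ℬ.rep (ζ (α₁ x)) (β₂ m) := by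
      intro x m
      have h := h3 (α₁ x) (β₂ m)
      simp only [LinearEquiv.symm_apply_apply] at h
      exact sub_eq_iff_eq_add'.mp h
    have hE4' : ∀ v a, β₂ (μ v a) = μ (α₂ v) (β₁ a) + -ℬ.rep (β₁ a) (η (α₂ v)) := by
      intro v a
      have h := h4 (α₂ v) (β₁ a)
      simp only [LinearEquiv.symm_apply_apply] at h
      exact sub_eq_iff_eq_add'.mp h
    have hE5' : ∀ v, β₁ (χ v) = χ (α₂ v) + (ℬ.T (η (α₂ v)) - ζ (𝒜.T (α₂ v))) := by
      intro v
      have h := h5 (α₂ v)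
      simp only [LinearEquiv.symm_apply_apply] at h
      exact sub_eq_iff_eq_add'.mp h
    have hE6' : ∀ x v, β₂ (ϖ x v) = ϖ (α₁ x) (α₂ v)
        + (ρM (α₁ x) (η (α₂ v)) + ℬ.rep (ζ (α₁ x)) (η (α₂ v)) - μ (α₂ v) (ζ (α₁ x))
          - η (𝒜.rep (α₁ x) (α₂ v))) := by
      intro x v
      have h := h6 (α₁ x) (α₂ v)
      simp only [LinearEquiv.symm_apply_apply] at h
      exact sub_eq_iff_eq_add'.mp h
    -- retractions
    have hmemB : ∀ z, ((LinearMap.id : Ah →ₗ[K] Ah) - sA ∘ₗ E.pA) z ∈ LinearMap.range E.iB := by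
      intro z
      have h0 : E.pA (((LinearMap.id : Ah →ₗ[K] Ah) - sA ∘ₗ E.pA) z) = 0 := by
        simp [map_sub, hsA]
      obtain ⟨b, hb⟩ := (E.exactA _).mp h0
      exact ⟨b, hb⟩
    obtain ⟨rB, hrB⟩ := exists_preim K E.iB E.iB_inj _ hmemB
    have hrB' : ∀ z, E.iB (rB z) = z - sA (E.pA z) := by
      intro z
      have h := hrB z
      simpa using h
    have hmemV : ∀ z, ((LinearMap.id : Vh →ₗ[K] Vh) - sV ∘ₗ E.pV) z ∈ LinearMap.range E.iM := by
      intro z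
      have h0 : E.pV (((LinearMap.id : Vh →ₗ[K] Vh) - sV ∘ₗ E.pV) z) = 0 := by
        simp [map_sub, hsV]
      obtain ⟨m, hm⟩ := (E.exactV _).mp h0
      exact ⟨m, hm⟩
    obtain ⟨rV, hrV⟩ := exists_preim K E.iM E.iM_inj _ hmemV
    have hrV' : ∀ z, E.iM (rV z) = z - sV (E.pV z) := by
      intro z
      have h := hrV z
      simpa using h
    have decompA : ∀ z, z = sA (E.pA z) + E.iB (rB z) := by
      intro z; rw [hrB']; abel
    have decompV : ∀ z, z = sV (E.pV z) + E.iM (rV z) := by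
      intro z; rw [hrV']; abel
    have pA_comb : ∀ u b, E.pA (sA u + E.iB b) = u := by
      intro u b; simp [map_add, hsA, pA_iB]
    have pV_comb : ∀ v m, E.pV (sV v + E.iM m) = v := by
      intro v m; simp [map_add, hsV, pV_iM]
    have rB_comb : ∀ u b, rB (sA u + E.iB b) = b := by
      intro u b
      apply E.iB_inj
      rw [hrB', pA_comb]
      abel
    have rV_comb : ∀ v m, rV (sV v + E.iM m) = m := by
      intro v m
      apply E.iM_inj
      rw [hrV', pV_comb]
      abel
    have ext_eqA : ∀ z w : Ah, E.pA z = E.pA w → rB z = rB w → z = w := by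
      intro z w h h'
      rw [decompA z, decompA w, h, h']
    have ext_eqV : ∀ z w : Vh, E.pV z = E.pV w → rV z = rV w → z = w := by
      intro z w h h'
      rw [decompV z, decompV w, h, h']
    -- additivity of the cocycle components in the second argument
    have ρB_add : ∀ x a b, ρB x (a + b) = ρB x a + ρB x b := by
      intro x a b
      apply E.iB_inj
      simp [hρB, map_add]
    have ρM_add : ∀ x m n, ρM x (m + n) = ρM x m + ρM x n := by
      intro x m n
      apply E.iM_inj
      simp [hρM, map_add]
    have μ_add : ∀ v a b, μ v (a + b) = μ v a + μ v b := by
      intro v a b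
      apply E.iM_inj
      simp only [hμ, map_add, LinearMap.add_apply]
      abel
    -- combination formulas for the bracket, T and rep
    have br_comb : ∀ u b w c, ℰ.br (sA u + E.iB b) (sA w + E.iB c)
        = sA (𝒜.br u w) + E.iB (ω u w + (ρB u c - ρB w b) + ℬ.br b c) := by
      intro u b w c
      have e1 : ℰ.br (sA u) (sA w) = sA (𝒜.br u w) + E.iB (ω u w) := by
        rw [hω]; abel
      simp only [map_add, map_sub, LinearMap.add_apply]
      rw [e1, ℰskew (E.iB b) (sA w), ← hρB, ← hρB, ← E.iB_br]
      abel
    have T_comb : ∀ v m, ℰ.T (sV v + E.iM m) = sA (𝒜.T v) + E.iB (χ v + ℬ.T m) := by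
      intro v m
      have e1 : ℰ.T (sV v) = sA (𝒜.T v) + E.iB (χ v) := by
        rw [hχ]; abel
      simp only [map_add]
      rw [e1, ← E.iB_T]
      abel
    have rep_comb : ∀ u b v m, ℰ.rep (sA u + E.iB b) (sV v + E.iM m)
        = sV (𝒜.rep u v) + E.iM (ϖ u v + (ρM u m - μ v b) + ℬ.rep b m) := by
      intro u b v m
      have e1 : ℰ.rep (sA u) (sV v) = sV (𝒜.rep u v) + E.iM (ϖ u v) := by
        rw [hϖ]; abel
      have e2 : ℰ.rep (E.iB b) (sV v) = -E.iM (μ v b) := by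
        rw [hμ, neg_neg]
      simp only [map_add, map_sub, LinearMap.add_apply]
      rw [e1, e2, ← hρM, ← E.i_rep]
      abel
    have rB_br : ∀ z w, rB (ℰ.br z w) = ω (E.pA z) (E.pA w)
        + (ρB (E.pA z) (rB w) - ρB (E.pA w) (rB z)) + ℬ.br (rB z) (rB w) := by
      intro z w
      conv_lhs => rw [decompA z, decompA w, br_comb, rB_comb]
    have rB_T : ∀ v, rB (ℰ.T v) = χ (E.pV v) + ℬ.T (rV v) := by
      intro v
      conv_lhs => rw [decompV v, T_comb, rB_comb]
    have rV_rep : ∀ z v, rV (ℰ.rep z v) = ϖ (E.pA z) (E.pV v)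
        + (ρM (E.pA z) (rV v) - μ (E.pV v) (rB z)) + ℬ.rep (rB z) (rV v) := by
      intro z v
      conv_lhs => rw [decompA z, decompV v, rep_comb, rV_comb]
    -- the automorphism γ₁, γ₂ and its inverse
    obtain ⟨g1, hg1⟩ : ∃ g1 : Ah →ₗ[K] Ah, ∀ z, g1 z
        = sA (α₁ (E.pA z)) + E.iB (ζ (α₁ (E.pA z)) + β₁ (rB z)) :=
      ⟨sA ∘ₗ (α₁ : A →ₗ[K] A) ∘ₗ E.pA
        + E.iB ∘ₗ (ζ ∘ₗ (α₁ : A →ₗ[K] A) ∘ₗ E.pA + (β₁ : B →ₗ[K] B) ∘ₗ rB),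
        fun z => by simp [LinearMap.add_apply, LinearMap.comp_apply]⟩
    obtain ⟨d1, hd1⟩ : ∃ d1 : Ah →ₗ[K] Ah, ∀ z, d1 z
        = sA (α₁.symm (E.pA z)) + E.iB (β₁.symm (rB z - ζ (E.pA z))) :=
      ⟨sA ∘ₗ (α₁.symm : A →ₗ[K] A) ∘ₗ E.pA
        + E.iB ∘ₗ (β₁.symm : B →ₗ[K] B) ∘ₗ (rB - ζ ∘ₗ E.pA),
        fun z => by simp [LinearMap.add_apply, LinearMap.comp_apply, LinearMap.sub_apply]⟩
    obtain ⟨g2, hg2⟩ : ∃ g2 : Vh →ₗ[K] Vh, ∀ z, g2 z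
        = sV (α₂ (E.pV z)) + E.iM (η (α₂ (E.pV z)) + β₂ (rV z)) :=
      ⟨sV ∘ₗ (α₂ : V →ₗ[K] V) ∘ₗ E.pV
        + E.iM ∘ₗ (η ∘ₗ (α₂ : V →ₗ[K] V) ∘ₗ E.pV + (β₂ : M →ₗ[K] M) ∘ₗ rV),
        fun z => by simp [LinearMap.add_apply, LinearMap.comp_apply]⟩
    obtain ⟨d2, hd2⟩ : ∃ d2 : Vh →ₗ[K] Vh, ∀ z, d2 z
        = sV (α₂.symm (E.pV z)) + E.iM (β₂.symm (rV z - η (E.pV z))) :=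
      ⟨sV ∘ₗ (α₂.symm : V →ₗ[K] V) ∘ₗ E.pV
        + E.iM ∘ₗ (β₂.symm : M →ₗ[K] M) ∘ₗ (rV - η ∘ₗ E.pV),
        fun z => by simp [LinearMap.add_apply, LinearMap.comp_apply, LinearMap.sub_apply]⟩
    have pA_g1 : ∀ z, E.pA (g1 z) = α₁ (E.pA z) := by
      intro z; rw [hg1, pA_comb]
    have rB_g1 : ∀ z, rB (g1 z) = ζ (α₁ (E.pA z)) + β₁ (rB z) := by
      intro z; rw [hg1, rB_comb]
    have pV_g2 : ∀ z, E.pV (g2 z) = α₂ (E.pV z) := by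
      intro z; rw [hg2, pV_comb]
    have rV_g2 : ∀ z, rV (g2 z) = η (α₂ (E.pV z)) + β₂ (rV z) := by
      intro z; rw [hg2, rV_comb]
    have hgd1 : ∀ z, g1 (d1 z) = z := by
      intro z
      rw [hd1, hg1, pA_comb, rB_comb]
      simp only [LinearEquiv.apply_symm_apply]
      rw [show ζ (E.pA z) + (rB z - ζ (E.pA z)) = rB z from by abel]
      exact (decompA z).symm
    have hdg1 : ∀ z, d1 (g1 z) = z := by
      intro z
      rw [hg1 z, hd1, pA_comb, rB_comb]
      simp only [LinearEquiv.symm_apply_apply]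
      rw [show ζ (α₁ (E.pA z)) + β₁ (rB z) - ζ (α₁ (E.pA z)) = β₁ (rB z) from by abel]
      simp only [LinearEquiv.symm_apply_apply]
      exact (decompA z).symm
    have hgd2 : ∀ z, g2 (d2 z) = z := by
      intro z
      rw [hd2, hg2, pV_comb, rV_comb]
      simp only [LinearEquiv.apply_symm_apply]
      rw [show η (E.pV z) + (rV z - η (E.pV z)) = rV z from by abel]
      exact (decompV z).symm
    have hdg2 : ∀ z, d2 (g2 z) = z := by
      intro z
      rw [hg2 z, hd2, pV_comb, rV_comb]
      simp only [LinearEquiv.symm_apply_apply]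
      rw [show η (α₂ (E.pV z)) + β₂ (rV z) - η (α₂ (E.pV z)) = β₂ (rV z) from by abel]
      simp only [LinearEquiv.symm_apply_apply]
      exact (decompV z).symm
    refine ⟨LinearEquiv.ofLinear g1 d1 (LinearMap.ext hgd1) (LinearMap.ext hdg1),
      LinearEquiv.ofLinear g2 d2 (LinearMap.ext hgd2) (LinearMap.ext hdg2),
      ?_, ?_, ?_, ?_, ?_, ?_, ?_⟩
    · intro z w
      simp only [LinearEquiv.ofLinear_apply]
      apply ext_eqA
      · simp only [pA_g1, E.pA_br]
        exact hαbr' _ _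
      · simp only [rB_g1, rB_br, pA_g1, E.pA_br]
        rw [hαbr']
        simp only [map_add, map_sub]
        rw [hE1', hE2', hE2', hβbr']
        simp only [ρB_add, map_add, LinearMap.add_apply]
        rw [ℬskew (β₁ (rB z)) (ζ (α₁ (E.pA w)))]
        abel
    · intro v
      simp only [LinearEquiv.ofLinear_apply]
      apply ext_eqA
      · simp only [pA_g1, E.p_T, pV_g2]
        exact hαT' _
      · simp only [rB_g1, rB_T, E.p_T, pV_g2, rV_g2]
        simp only [map_add]
        rw [hαT', hE5', hβT']
        abel
    · intro z v
      simp only [LinearEquiv.ofLinear_apply]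
      apply ext_eqV
      · simp only [pV_g2, E.p_rep, pA_g1]
        exact hαrep' _ _
      · simp only [rV_g2, rV_rep, pA_g1, pV_g2, rB_g1, E.p_rep]
        rw [hαrep']
        simp only [map_add, map_sub]
        rw [hE6', hE3', hE4', hβrep']
        simp only [ρM_add, μ_add, map_add, LinearMap.add_apply]
        abel
    · intro a
      simp only [LinearEquiv.ofLinear_apply]
      have rB_iB : rB (E.iB a) = a := by
        have h := rB_comb 0 a
        simpa using h
      rw [hg1]
      simp [pA_iB, rB_iB]
    · intro m
      simp only [LinearEquiv.ofLinear_apply]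
      have rV_iM : rV (E.iM m) = m := by
        have h := rV_comb 0 m
        simpa using h
      rw [hg2]
      simp [pV_iM, rV_iM]
    · intro x
      simp only [LinearEquiv.ofLinear_apply]
      have rB_sA : rB (sA x) = 0 := by
        have h := rB_comb x 0
        simpa using h
      rw [hg1]
      simp [map_add, hsA, pA_iB, rB_sA]
    · intro v
      simp only [LinearEquiv.ofLinear_apply]
      have rV_sV : rV (sV v) = 0 := by
        have h := rV_comb v 0
        simpa using h
      rw [hg2]
      simp [map_add, hsV, pV_iM, rV_sV]


end
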